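/- Fix B ∈ (0,1), p₀ ≠ 0, and let F(k) = k² sin((1−B)k) − p₀ sin((1+B)k). Then there exists R > 0 such that for every zero k₀ of F with |k₀| > R, |Im k₀| ≤ (log|k₀|)·C/ min(1−B, 2B) for some constant C depending only on B and p₀. -/

import Mathlib

open Complex

lemma my_abs_sin_le (z : ℂ) : ‖Complex.sin z‖ ≤ Real.exp |z.im| := by
  rw [Complex.sin, norm_div, norm_mul, Complex.norm_I, mul_one, Complex.norm_two]
  have h1 : ‖Complex.exp (-z * I) - Complex.exp (z * I)‖ ≤
      Real.exp z.im + Real.exp (-z.im) := by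
    calc ‖Complex.exp (-z * I) - Complex.exp (z * I)‖
        ≤ ‖Complex.exp (-z * I)‖ + ‖Complex.exp (z * I)‖ := by
          simpa using norm_sub_le (Complex.exp (-z * I)) (Complex.exp (z * I))
      _ = Real.exp z.im + Real.exp (-z.im) := by
          rw [Complex.norm_exp, Complex.norm_exp]
          simp [Complex.mul_re, Complex.I_re, Complex.I_im]
  have h2 : Real.exp z.im + Real.exp (-z.im) ≤ 2 * Real.exp |z.im| := by
    have := Real.exp_le_exp.2 (le_abs_self z.im)
    have := Real.exp_le_exp.2 (neg_le_abs z.im)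
    linarith
  linarith [h1, h2, (div_le_div_iff_of_pos_right (c := (2:ℝ)) (by norm_num)).2 (h1.trans h2)]

lemma my_abs_sin_ge (z : ℂ) :
    (Real.exp |z.im| - Real.exp (-|z.im|)) / 2 ≤ ‖Complex.sin z‖ := by
  rw [Complex.sin, norm_div, norm_mul, Complex.norm_I, mul_one, Complex.norm_two]
  set a := Complex.exp (-z * I) with ha
  set b := Complex.exp (z * I) with hb
  have hre1 : ‖a‖ = Real.exp z.im := by
    rw [ha, Complex.norm_exp]; simp [Complex.mul_re, Complex.I_re, Complex.I_im]
  have hre2 : ‖b‖ = Real.exp (-z.im) := by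
    rw [hb, Complex.norm_exp]; simp [Complex.mul_re, Complex.I_re, Complex.I_im]
  have h1 : Real.exp z.im - Real.exp (-z.im) ≤ ‖a - b‖ := by
    have h := norm_sub_norm_le a b
    rwa [hre1, hre2] at h
  have h2 : Real.exp (-z.im) - Real.exp z.im ≤ ‖a - b‖ := by
    have h := norm_sub_norm_le b a
    rw [norm_sub_rev] at h
    rwa [hre1, hre2] at h
  have h3 : Real.exp |z.im| - Real.exp (-|z.im|) ≤ ‖a - b‖ := by
    rcases abs_cases z.im with ⟨h, _⟩ | ⟨h, _⟩
    · rw [h]; exact h1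
    · rw [h]; simpa using h2
  linarith

/-- Logarithmic-strip bound on the large zeros of
`F(k) = k² sin((1−B)k) − p₀ sin((1+B)k)`, `0 < B < 1`, `p₀ ≠ 0`. -/
theorem stmt_14 (B p₀ : ℝ) (hB : 0 < B) (hB1 : B < 1) (hp : p₀ ≠ 0)
    (F : ℂ → ℂ)
    (hF : ∀ k : ℂ, F k =
      k ^ 2 * Complex.sin (((1 : ℂ) - B) * k) - (p₀ : ℂ) * Complex.sin (((1 : ℂ) + B) * k)) :
    ∃ C R : ℝ, 0 < C ∧ 0 < R ∧ ∀ k : ℂ, F k = 0 → R < ‖k‖ →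
      |k.im| ≤ C * Real.log ‖k‖ / min (1 - B) (2 * B) := by
  have hp' : 0 < |p₀| := abs_pos.2 hp
  refine ⟨3, Real.exp 1 + 4 / |p₀|, by norm_num, by positivity, ?_⟩
  intro k hk0 hR
  have hmin : 0 < min (1 - B) (2 * B) := lt_min (by linarith) (by linarith)
  have hspos : 0 < ‖k‖ := by
    have : (0:ℝ) < Real.exp 1 + 4 / |p₀| := by positivity
    linarith
  have hse : Real.exp 1 < ‖k‖ := by
    have : (0:ℝ) < 4 / |p₀| := by positivity
    linarith
  have hL : 1 ≤ Real.log ‖k‖ :=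
    (Real.le_log_iff_exp_le hspos).2 hse.le
  have hlog4 : Real.log (4 / |p₀|) ≤ Real.log ‖k‖ := by
    apply Real.log_le_log (by positivity)
    have : (0:ℝ) < Real.exp 1 := Real.exp_pos 1
    linarith
  rcases le_or_gt |k.im| 1 with hy | hy
  · have h1 : min (1 - B) (2 * B) ≤ 1 - B := min_le_left _ _
    calc |k.im| ≤ 1 := hy
      _ ≤ 3 * Real.log ‖k‖ / min (1 - B) (2 * B) := by
          rw [le_div_iff₀ hmin]; nlinarith
  · -- main case: |Im k| > 1
    have h0 : k ^ 2 * Complex.sin (((1 : ℂ) - B) * k)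
        - (p₀ : ℂ) * Complex.sin (((1 : ℂ) + B) * k) = 0 := by
      rw [← hF]; exact hk0
    have heq : ‖k ^ 2‖ * ‖Complex.sin (((1 : ℂ) - B) * k)‖
        = |p₀| * ‖Complex.sin (((1 : ℂ) + B) * k)‖ := by
      have h := sub_eq_zero.mp h0
      have := congrArg (‖·‖) h
      simpa [norm_mul, Complex.norm_real] using this
    have him1 : (((1 : ℂ) - B) * k).im = (1 - B) * k.im := by
      simp [Complex.mul_im, Complex.sub_im, Complex.sub_re]
    have him2 : (((1 : ℂ) + B) * k).im = (1 + B) * k.im := by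
      simp [Complex.mul_im, Complex.add_im, Complex.add_re]
    have habs1 : |(((1 : ℂ) - B) * k).im| = (1 - B) * |k.im| := by
      rw [him1, abs_mul, abs_of_pos (by linarith : (0:ℝ) < 1 - B)]
    have habs2 : |(((1 : ℂ) + B) * k).im| = (1 + B) * |k.im| := by
      rw [him2, abs_mul, abs_of_pos (by linarith : (0:ℝ) < 1 + B)]
    -- upper bound on sin((1-B)k)
    have hA1 : ‖Complex.sin (((1 : ℂ) - B) * k)‖ ≤ Real.exp ((1 - B) * |k.im|) := by
      have := my_abs_sin_le (((1 : ℂ) - B) * k)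
      rwa [habs1] at this
    -- lower bound on sin((1+B)k)
    have ht1 : 1 ≤ (1 + B) * |k.im| := by nlinarith
    have hA2 : Real.exp ((1 + B) * |k.im|) / 4 ≤
        ‖Complex.sin (((1 : ℂ) + B) * k)‖ := by
      have hlow := my_abs_sin_ge (((1 : ℂ) + B) * k)
      rw [habs2] at hlow
      have e1 : (2:ℝ) ≤ Real.exp ((1 + B) * |k.im|) := by
        have := Real.add_one_le_exp ((1 + B) * |k.im|)
        linarith
      have e2 : Real.exp (-((1 + B) * |k.im|)) ≤ 1 := by
        rw [Real.exp_le_one_iff]; linarith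
      linarith
    -- combine
    have key : |p₀| * (Real.exp ((1 + B) * |k.im|) / 4) ≤
        ‖k‖ ^ 2 * Real.exp ((1 - B) * |k.im|) := by
      calc |p₀| * (Real.exp ((1 + B) * |k.im|) / 4)
          ≤ |p₀| * ‖Complex.sin (((1 : ℂ) + B) * k)‖ := by
            exact mul_le_mul_of_nonneg_left hA2 (abs_nonneg _)
        _ = ‖k ^ 2‖ * ‖Complex.sin (((1 : ℂ) - B) * k)‖ := heq.symm
        _ ≤ ‖k‖ ^ 2 * Real.exp ((1 - B) * |k.im|) := by
            rw [norm_pow]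
            exact mul_le_mul_of_nonneg_left hA1 (by positivity)
    have hsplit : Real.exp ((1 + B) * |k.im|)
        = Real.exp (2 * B * |k.im|) * Real.exp ((1 - B) * |k.im|) := by
      rw [← Real.exp_add]; ring_nf
    have key2 : |p₀| * Real.exp (2 * B * |k.im|) ≤ 4 * ‖k‖ ^ 2 := by
      have hep : (0:ℝ) < Real.exp ((1 - B) * |k.im|) := Real.exp_pos _
      rw [hsplit] at key
      have : |p₀| * Real.exp (2 * B * |k.im|) * Real.exp ((1 - B) * |k.im|)
          ≤ 4 * ‖k‖ ^ 2 * Real.exp ((1 - B) * |k.im|) := by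
        nlinarith [key]
      exact le_of_mul_le_mul_right this hep
    have key3 : Real.exp (2 * B * |k.im|) ≤ 4 / |p₀| * ‖k‖ ^ 2 := by
      rw [div_mul_eq_mul_div, le_div_iff₀ hp']
      nlinarith [key2]
    have key4 : 2 * B * |k.im| ≤ Real.log (4 / |p₀|) + 2 * Real.log ‖k‖ := by
      have := Real.log_le_log (Real.exp_pos _) key3
      rw [Real.log_exp, Real.log_mul (by positivity) (by positivity),
        Real.log_pow] at this
      push_cast at this
      linarith
    have key5 : 2 * B * |k.im| ≤ 3 * Real.log ‖k‖ := by linarith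
    rw [le_div_iff₀ hmin]
    have hminr : min (1 - B) (2 * B) ≤ 2 * B := min_le_right _ _
    nlinarith [abs_nonneg k.im]
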